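/- Let a, b ∈ ℤ³ be primitive and ℚ-linearly independent. Then for every x ∈ U⁺_a ∩ U⁺_b and every w ∈ ℂ with w ≠ δ(x) for all δ ∈ ℤ³, one has the inversion relation Γ_{a,b}(w,x)·Γ_{b,a}(w,x) = 1. -/

import Mathlib

namespace EGG

/-- Integer vectors in `ℤ³`. -/
abbrev V : Type := Fin 3 → ℤ

/-- gcd of the three coordinates. -/
def gcd3 (v : V) : ℕ := Nat.gcd (Nat.gcd (v 0).natAbs (v 1).natAbs) (v 2).natAbs

/-- A vector of `ℤ³` is primitive if it is nonzero and the gcd of its coordinates is 1. -/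
def Primitive (a : V) : Prop := a ≠ 0 ∧ gcd3 a = 1

/-- Cross product of integer vectors. -/
def cross (a b : V) : V :=
  ![a 1 * b 2 - a 2 * b 1, a 2 * b 0 - a 0 * b 2, a 0 * b 1 - a 1 * b 0]

/-- Dot product of integer vectors. -/
def dotZ (α a : V) : ℤ := α 0 * a 0 + α 1 * a 1 + α 2 * a 2

/-- Dot product of a rational vector with an integer vector. -/
def dotQ (α : Fin 3 → ℚ) (a : V) : ℚ := α 0 * (a 0 : ℚ) + α 1 * (a 1 : ℚ) + α 2 * (a 2 : ℚ)

/-- Dot product of a real vector with an integer vector. -/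
def dotR (l : Fin 3 → ℝ) (a : V) : ℝ := l 0 * (a 0 : ℝ) + l 1 * (a 1 : ℝ) + l 2 * (a 2 : ℝ)

/-- The pairing `α(x) = α₁x₁+α₂x₂+α₃x₃` of a rational vector with a complex vector. -/
noncomputable def pairQ (α : Fin 3 → ℚ) (x : Fin 3 → ℂ) : ℂ :=
  (α 0 : ℂ) * x 0 + (α 1 : ℂ) * x 1 + (α 2 : ℂ) * x 2

/-- The pairing `α(x) = α₁x₁+α₂x₂+α₃x₃` of an integer vector with a complex vector. -/
noncomputable def pairZ (α : V) (x : Fin 3 → ℂ) : ℂ :=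
  (α 0 : ℂ) * x 0 + (α 1 : ℂ) * x 1 + (α 2 : ℂ) * x 2

/-- The canonical map `ℤ³ → ℚ³`. -/
def toQ (a : V) : Fin 3 → ℚ := fun i => (a i : ℚ)

/-- Determinant of the 3×3 matrix with rows `α, β, δ`. -/
def det3Q (α β δ : Fin 3 → ℚ) : ℚ := Matrix.det (Matrix.of ![α, β, δ])

/-- `(α, β)` is an oriented basis of the plane `H(a) = {α : α·a = 0}`. -/
def IsOrientedBasis (a : V) (α β : Fin 3 → ℚ) : Prop :=
  dotQ α a = 0 ∧ dotQ β a = 0 ∧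
  LinearIndependent ℚ ![α, β] ∧
  (∀ δ : Fin 3 → ℚ, dotQ δ a = 0 → ∃ p q : ℚ, δ = p • α + q • β) ∧
  (∀ δ : Fin 3 → ℚ, 0 < dotQ δ a → 0 < det3Q α β δ)

/-- The domain `U⁺_a ⊆ ℂ³`. -/
noncomputable def UPlus (a : V) : Set (Fin 3 → ℂ) :=
  {x | ∃ α β : Fin 3 → ℚ, IsOrientedBasis a α β ∧
    0 < (pairQ α x * (starRingEnd ℂ) (pairQ β x)).im}

/-- `γ` is the direction vector of the wedge `(a,b)`: `γ` is primitive and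
`a × b = s • γ` for some integer `s ≥ 1` (the modulus). -/
def IsDirVec (a b γ : V) : Prop :=
  Primitive γ ∧ ∃ s : ℤ, 1 ≤ s ∧ cross a b = s • γ

/-- `C₊₋(a,b) = {δ ∈ ℤ³ : δ·a > 0, δ·b ≤ 0}`. -/
def Cpm (a b : V) : Set V := {δ | 0 < dotZ δ a ∧ dotZ δ b ≤ 0}

/-- `C₋₊(a,b) = {δ ∈ ℤ³ : δ·a ≤ 0, δ·b > 0}`. -/
def Cmp (a b : V) : Set V := {δ | dotZ δ a ≤ 0 ∧ 0 < dotZ δ b}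

/-- The factor `1 - e^{-2πi(δ(x)-w)/γ(x)}` appearing in the numerator of `Γ_{a,b}`. -/
noncomputable def gammaFacP (γ : V) (x : Fin 3 → ℂ) (w : ℂ) (δ : V) : ℂ :=
  1 - Complex.exp (-(2 * (Real.pi : ℂ) * Complex.I) * (pairZ δ x - w) / pairZ γ x)

/-- The factor `1 - e^{2πi(δ(x)-w)/γ(x)}` appearing in the denominator of `Γ_{a,b}`. -/
noncomputable def gammaFacM (γ : V) (x : Fin 3 → ℂ) (w : ℂ) (δ : V) : ℂ :=
  1 - Complex.exp ((2 * (Real.pi : ℂ) * Complex.I) * (pairZ δ x - w) / pairZ γ x)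

/-- The gamma function `Γ_{a,b}(w,x)` of the wedge `(a,b)` with direction vector `γ`:
the products run over the sets `C₊₋(a,b)/ℤγ` and `C₋₊(a,b)/ℤγ`; each factor is evaluated
on the chosen representative `Quotient.out q` of the class `q` (the factors are constant
on classes modulo `ℤγ`). -/
noncomputable def GammaWedge (a b γ : V) (w : ℂ) (x : Fin 3 → ℂ) : ℂ :=
  if a = b then 1 else
    (∏' q : (QuotientAddGroup.mk '' Cpm a b : Set (V ⧸ AddSubgroup.zmultiples γ)),
      gammaFacP γ x w (Quotient.out (q : V ⧸ AddSubgroup.zmultiples γ))) /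
    (∏' q : (QuotientAddGroup.mk '' Cmp a b : Set (V ⧸ AddSubgroup.zmultiples γ)),
      gammaFacM γ x w (Quotient.out (q : V ⧸ AddSubgroup.zmultiples γ)))

/-- The theta function `θ₀(z,τ)`, for `Im τ > 0`. -/
noncomputable def theta0 (z τ : ℂ) : ℂ :=
  ∏' j : ℕ, ((1 - Complex.exp (2 * (Real.pi : ℂ) * Complex.I * (((j : ℂ) + 1) * τ - z))) *
    (1 - Complex.exp (2 * (Real.pi : ℂ) * Complex.I * ((j : ℂ) * τ + z))))

/-- The elliptic gamma function `Γ(z,τ,σ)`, for `Im τ > 0` and `Im σ > 0`. -/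
noncomputable def ellGamma (z τ σ : ℂ) : ℂ :=
  (∏' p : ℕ × ℕ, (1 - Complex.exp (2 * (Real.pi : ℂ) * Complex.I *
      (((p.1 : ℂ) + 1) * τ + ((p.2 : ℂ) + 1) * σ - z)))) /
  (∏' p : ℕ × ℕ, (1 - Complex.exp (2 * (Real.pi : ℂ) * Complex.I *
      ((p.1 : ℂ) * τ + (p.2 : ℂ) * σ + z))))

/-- The elliptic gamma function `Γ̃(z,τ,σ)` in the domain `Im τ < 0 < Im σ`. -/
noncomputable def ellGammaTilde (z τ σ : ℂ) : ℂ :=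
  (∏' p : ℕ × ℕ, (1 - Complex.exp (2 * (Real.pi : ℂ) * Complex.I *
      (z - ((p.1 : ℂ) + 1) * τ + (p.2 : ℂ) * σ)))) /
  (∏' p : ℕ × ℕ, (1 - Complex.exp (2 * (Real.pi : ℂ) * Complex.I *
      (-z - (p.1 : ℂ) * τ + ((p.2 : ℂ) + 1) * σ))))

/-- The polynomial `P₂`. -/
noncomputable def P2 (w x₁ x₂ : ℂ) : ℂ :=
  (w ^ 2 - (x₁ + x₂) * w + (x₁ ^ 2 + x₂ ^ 2 + 3 * x₁ * x₂) / 6) / (x₁ * x₂)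

/-- The Bernoulli polynomial `P₃ = B₃,₃`. -/
noncomputable def P3 (w x₁ x₂ x₃ : ℂ) : ℂ :=
  w ^ 3 / (x₁ * x₂ * x₃) - (3 * (x₁ + x₂ + x₃) / (2 * (x₁ * x₂ * x₃))) * w ^ 2
    + ((x₁ ^ 2 + x₂ ^ 2 + x₃ ^ 2 + 3 * x₁ * x₂ + 3 * x₂ * x₃ + 3 * x₁ * x₃)
        / (2 * (x₁ * x₂ * x₃))) * w
    - (1 / 4) * (x₁ + x₂ + x₃) * (1 / x₁ + 1 / x₂ + 1 / x₃)

/-- The real polynomial `R₃ = B₂,₃`. -/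
noncomputable def R3 (ζ t s : ℝ) : ℝ :=
  ζ ^ 3 / (t * s) - (3 / 2) * (1 / t + 1 / s) * ζ ^ 2
    + (t / (2 * s) + s / (2 * t) + 3 / 2) * ζ - (t + s) / 4

/-- The hermitian weight `h₂(z,τ)` for the theta bundle. -/
noncomputable def h2 (z τ : ℂ) : ℝ :=
  Real.exp (-2 * Real.pi * z.im ^ 2 / τ.im + 2 * Real.pi * (z - τ / 6).im)

/-- The hermitian weight `h₃(z,τ,σ)`. -/
noncomputable def h3 (z τ σ : ℂ) : ℝ :=
  Real.exp (-(2 * Real.pi / 3) * R3 z.im τ.im σ.im)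

/-- The finite product of theta functions `Δ` with parameters `A₁ = α₁(x)`, `A₂ = α₂(x)`,
`A₃ = α₃(x)` and first framing coordinate `m = μ(a)`:
`∏_{j=0}^{m-1} θ₀((w+jA₁)/A₃, A₂/A₃)` for `m ≥ 0` and
`(∏_{j=m}^{-1} θ₀((w+jA₁)/A₃, A₂/A₃))⁻¹` for `m < 0`. -/
noncomputable def DeltaInt (w A₁ A₂ A₃ : ℂ) (m : ℤ) : ℂ :=
  if 0 ≤ m then
    ∏ j ∈ Finset.range m.toNat, theta0 ((w + (j : ℂ) * A₁) / A₃) (A₂ / A₃)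
  else
    (∏ j ∈ Finset.range (-m).toNat, theta0 ((w - ((j : ℂ) + 1) * A₁) / A₃) (A₂ / A₃))⁻¹

/-!
Since `b × a = -(a × b)`, the direction vector of `(b,a)` is `-γ`, where `γ = γ_{a,b}`. Replacing
`γ` by `-γ` exchanges the two kinds of factors, and `C₊₋(b,a) = C₋₊(a,b)`, so `Γ_{b,a}` is the
quotient of the same two infinite products as `Γ_{a,b}`, taken the other way up. It remains to
show that these products are nonzero. `Im (δ(x)/γ(x))` vanishes on `ℤγ`, so it equals
`c₁ (δ·a) + c₂ (δ·b)`, and `x ∈ U⁺_a ∩ U⁺_b` gives `c₁ < 0 < c₂`. Hence the factors over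
`C₊₋(a,b)/ℤγ` tend to `1` geometrically, and no factor vanishes because `w ∉ {δ(x)}`.
-/

section IntegerVectors

variable {a b c γ γ' v : V}

lemma dotZ_sub (u v a : V) : dotZ (u - v) a = dotZ u a - dotZ v a := by
  simp only [dotZ, Pi.sub_apply]; ring

lemma dotZ_smul (k : ℤ) (u a : V) : dotZ (k • u) a = k * dotZ u a := by
  simp only [dotZ, Pi.smul_apply, smul_eq_mul]; ring

lemma dotZ_self_pos (hv : v ≠ 0) : 0 < dotZ v v := by
  obtain ⟨i, hi⟩ := Function.ne_iff.mp hv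
  have hvi := mul_self_pos.mpr hi
  unfold dotZ
  fin_cases i <;> dsimp at hvi <;>
    nlinarith [mul_self_nonneg (v 0), mul_self_nonneg (v 1), mul_self_nonneg (v 2)]

lemma cross_swap (a b : V) : cross b a = -cross a b := by
  funext i; fin_cases i <;> simp [cross] <;> ring

lemma cross_self (a : V) : cross a a = 0 := by
  funext i; fin_cases i <;> simp [cross] <;> ring

lemma cross_zero_right (a : V) : cross a 0 = 0 := by
  funext i; fin_cases i <;> simp [cross]

lemma dotZ_cross_left (a b : V) : dotZ (cross a b) a = 0 := by
  simp only [dotZ, cross, Matrix.cons_val_zero, Matrix.cons_val_one, Matrix.cons_val]; ring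

lemma dotZ_cross_right (a b : V) : dotZ (cross a b) b = 0 := by
  simp only [dotZ, cross, Matrix.cons_val_zero, Matrix.cons_val_one, Matrix.cons_val]; ring

lemma dotZ_cross_self (a b : V) :
    dotZ (cross a b) (cross a b) = dotZ a a * dotZ b b - dotZ a b ^ 2 := by
  simp only [dotZ, cross, Matrix.cons_val_zero, Matrix.cons_val_one, Matrix.cons_val]; ring

lemma cross_cross_eq_zero (hva : dotZ v a = 0) (hvb : dotZ v b = 0) :
    cross v (cross a b) = 0 := by
  have ha : v 0 * a 0 + v 1 * a 1 + v 2 * a 2 = 0 := hva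
  have hb : v 0 * b 0 + v 1 * b 1 + v 2 * b 2 = 0 := hvb
  funext i
  fin_cases i <;> simp only [cross, Pi.zero_apply, Matrix.cons_val_zero, Matrix.cons_val_one,
    Matrix.cons_val, Fin.zero_eta, Fin.mk_one, Fin.reduceFinMk]
  · linear_combination a 0 * hb - b 0 * ha
  · linear_combination a 1 * hb - b 1 * ha
  · linear_combination a 2 * hb - b 2 * ha

lemma cross_smul_right (v γ : V) (k : ℤ) : cross v (k • γ) = k • cross v γ := by
  funext i; fin_cases i <;> simp [cross] <;> ring

lemma eq_smul_of_cross_eq_zero (hv : cross v γ = 0) (hc : dotZ γ c = 1) :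
    v = dotZ v c • γ := by
  have e0 := congrFun hv 0
  have e1 := congrFun hv 1
  have e2 := congrFun hv 2
  have hc' : γ 0 * c 0 + γ 1 * c 1 + γ 2 * c 2 = 1 := hc
  simp only [cross, Pi.zero_apply, Matrix.cons_val_zero, Matrix.cons_val_one, Matrix.cons_val]
    at e0 e1 e2
  funext i
  fin_cases i <;> simp only [dotZ, Pi.smul_apply, smul_eq_mul, Fin.zero_eta, Fin.mk_one,
    Fin.reduceFinMk]
  · linear_combination (-v 0) * hc' + c 1 * e2 - c 2 * e1
  · linear_combination (-v 1) * hc' - c 0 * e2 + c 2 * e0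
  · linear_combination (-v 2) * hc' + c 0 * e1 - c 1 * e0

lemma gcd3_smul (k : ℤ) (v : V) : gcd3 (k • v) = k.natAbs * gcd3 v := by
  simp only [gcd3, Pi.smul_apply, smul_eq_mul, Int.natAbs_mul, Nat.gcd_mul_left]

lemma Primitive.neg (h : Primitive γ) : Primitive (-γ) :=
  ⟨neg_ne_zero.mpr h.1, by simpa only [gcd3, Pi.neg_apply, Int.natAbs_neg] using h.2⟩

lemma Primitive.exists_dotZ_eq_one (h : Primitive γ) : ∃ c : V, dotZ γ c = 1 := by
  set g : ℤ := (Int.gcd (γ 0) (γ 1) : ℤ)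
  have hg : (Int.gcd g (γ 2) : ℤ) = 1 := by
    have := h.2
    simp only [gcd3] at this
    simp [g, Int.gcd, this]
  refine ⟨![Int.gcdA (γ 0) (γ 1) * Int.gcdA g (γ 2), Int.gcdB (γ 0) (γ 1) * Int.gcdA g (γ 2),
    Int.gcdB g (γ 2)], ?_⟩
  rw [← hg, Int.gcd_eq_gcd_ab g, show g = _ from Int.gcd_eq_gcd_ab (γ 0) (γ 1)]
  simp only [dotZ, Matrix.cons_val_zero, Matrix.cons_val_one, Matrix.cons_val]; ring

lemma Primitive.eq_of_smul_eq {s t : ℤ} (hγ : Primitive γ) (hγ' : Primitive γ')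
    (hs : 0 < s) (ht : 0 < t) (h : s • γ = t • γ') : γ = γ' := by
  have hst : s = t := by
    have := congrArg gcd3 h
    rw [gcd3_smul, gcd3_smul, hγ.2, hγ'.2] at this
    omega
  subst hst
  exact smul_right_injective V hs.ne' h

end IntegerVectors

namespace IsDirVec

variable {a b γ γ' v δ δ' : V}

lemma cross_ne_zero (h : IsDirVec a b γ) : cross a b ≠ 0 := by
  obtain ⟨⟨hγ, -⟩, s, hs, hcross⟩ := h
  rw [hcross]
  exact smul_ne_zero (by omega) hγ

lemma right_ne_zero (h : IsDirVec a b γ) : b ≠ 0 := by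
  rintro rfl; exact h.cross_ne_zero (cross_zero_right a)

lemma ne (h : IsDirVec a b γ) : a ≠ b := by
  rintro rfl; exact h.cross_ne_zero (cross_self a)

lemma dotZ_left_eq_zero (h : IsDirVec a b γ) : dotZ γ a = 0 := by
  obtain ⟨-, s, hs, hcross⟩ := h
  have := dotZ_cross_left a b
  rw [hcross, dotZ_smul] at this
  exact (mul_eq_zero.mp this).resolve_left (by omega)

lemma dotZ_right_eq_zero (h : IsDirVec a b γ) : dotZ γ b = 0 := by
  obtain ⟨-, s, hs, hcross⟩ := h
  have := dotZ_cross_right a b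
  rw [hcross, dotZ_smul] at this
  exact (mul_eq_zero.mp this).resolve_left (by omega)

lemma swap (h : IsDirVec a b γ) : IsDirVec b a (-γ) := by
  obtain ⟨hγ, s, hs, hcross⟩ := h
  exact ⟨hγ.neg, s, hs, by rw [cross_swap, hcross, smul_neg]⟩

lemma unique (h : IsDirVec a b γ) (h' : IsDirVec a b γ') : γ = γ' := by
  obtain ⟨hγ, s, hs, hcross⟩ := h
  obtain ⟨hγ', s', hs', hcross'⟩ := h'
  exact hγ.eq_of_smul_eq hγ' (by omega) (by omega) (hcross.symm.trans hcross')

lemma mem_zmultiples (h : IsDirVec a b γ) (hva : dotZ v a = 0) (hvb : dotZ v b = 0) :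
    v ∈ AddSubgroup.zmultiples γ := by
  obtain ⟨hγ, s, hs, hcross⟩ := h
  obtain ⟨c, hc⟩ := hγ.exists_dotZ_eq_one
  have hvγ : cross v γ = 0 := by
    have := cross_cross_eq_zero hva hvb
    rw [hcross, cross_smul_right] at this
    exact (smul_eq_zero.mp this).resolve_left (by omega)
  exact ⟨dotZ v c, (eq_smul_of_cross_eq_zero hvγ hc).symm⟩

lemma mk_eq_mk_iff (h : IsDirVec a b γ) :
    (δ : V ⧸ AddSubgroup.zmultiples γ) = δ' ↔ dotZ δ a = dotZ δ' a ∧ dotZ δ b = dotZ δ' b := by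
  rw [QuotientAddGroup.eq_iff_sub_mem]
  constructor
  · rintro ⟨k, hk⟩
    have ha := congrArg (dotZ · a) hk
    have hb := congrArg (dotZ · b) hk
    simp only [dotZ_smul, dotZ_sub, h.dotZ_left_eq_zero, h.dotZ_right_eq_zero, mul_zero] at ha hb
    omega
  · rintro ⟨ha, hb⟩
    exact h.mem_zmultiples (by rw [dotZ_sub, ha, sub_self]) (by rw [dotZ_sub, hb, sub_self])

lemma out_mem_Cpm (h : IsDirVec a b γ) {q : V ⧸ AddSubgroup.zmultiples γ}
    (hq : q ∈ QuotientAddGroup.mk '' Cpm a b) : Quotient.out q ∈ Cpm a b := by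
  obtain ⟨δ, hδ, rfl⟩ := hq
  obtain ⟨ha, hb⟩ := h.mk_eq_mk_iff.mp (QuotientAddGroup.out_eq' (δ : V ⧸ _))
  exact ⟨ha ▸ hδ.1, hb ▸ hδ.2⟩

lemma gram_pos (h : IsDirVec a b γ) : 0 < dotZ a a * dotZ b b - dotZ a b ^ 2 :=
  dotZ_cross_self a b ▸ dotZ_self_pos h.cross_ne_zero

end IsDirVec

section Pairings

variable {e c γ ξ : V} {x : Fin 3 → ℂ}

lemma pairZ_neg (γ : V) (x : Fin 3 → ℂ) : pairZ (-γ) x = -pairZ γ x := by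
  simp only [pairZ, Pi.neg_apply]; push_cast; ring

lemma pairZ_smul (k : ℤ) (v : V) (x : Fin 3 → ℂ) : pairZ (k • v) x = k * pairZ v x := by
  simp only [pairZ, Pi.smul_apply, smul_eq_mul]; push_cast; ring

lemma pairZ_add (u v : V) (x : Fin 3 → ℂ) : pairZ (u + v) x = pairZ u x + pairZ v x := by
  simp only [pairZ, Pi.add_apply]; push_cast; ring

lemma pairZ_sub (u v : V) (x : Fin 3 → ℂ) : pairZ (u - v) x = pairZ u x - pairZ v x := by
  simp only [pairZ, Pi.sub_apply]; push_cast; ring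

lemma dotQ_toQ (c e : V) : dotQ (toQ c) e = dotZ c e := by
  simp [dotQ, dotZ, toQ]

lemma toQ_smul (k : ℤ) (v : V) : toQ (k • v) = (k : ℚ) • toQ v := by
  funext i; simp [toQ]

lemma pairZ_eq_of_toQ_eq {α β : Fin 3 → ℚ} {p q : ℚ} (h : toQ c = p • α + q • β)
    (x : Fin 3 → ℂ) : pairZ c x = p * pairQ α x + q * pairQ β x := by
  have : pairZ c x = pairQ (toQ c) x := by simp [pairZ, pairQ, toQ]
  rw [this, h]
  simp only [pairQ, Pi.add_apply, Pi.smul_apply, smul_eq_mul]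
  push_cast; ring

lemma det3Q_smul_add_smul (p q r t : ℚ) (α β ξ : Fin 3 → ℚ) :
    det3Q (p • α + q • β) (r • α + t • β) ξ = (p * t - q * r) * det3Q α β ξ := by
  simp only [det3Q, Matrix.det_fin_three, Matrix.of_apply, Matrix.cons_val, Pi.add_apply,
    Pi.smul_apply, smul_eq_mul]
  ring

lemma det3Q_smul_middle (k : ℚ) (α β ξ : Fin 3 → ℚ) :
    det3Q α (k • β) ξ = k * det3Q α β ξ := by
  simp only [det3Q, Matrix.det_fin_three, Matrix.of_apply, Matrix.cons_val, Pi.smul_apply,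
    smul_eq_mul]
  ring

lemma det3Q_toQ_cross (c a b ξ : V) :
    det3Q (toQ c) (toQ (cross a b)) (toQ ξ) = dotZ c b * dotZ ξ a - dotZ c a * dotZ ξ b := by
  simp only [det3Q, Matrix.det_fin_three, Matrix.of_apply, Matrix.cons_val, toQ, cross, dotZ]
  push_cast; ring

lemma im_mul_conj_add_mul (p q r t : ℚ) (A B : ℂ) :
    ((p * A + q * B) * (starRingEnd ℂ) (r * A + t * B)).im
      = (p * t - q * r) * (A * (starRingEnd ℂ) B).im := by
  simp only [map_add, map_mul, Complex.mul_im, Complex.mul_re,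
    Complex.add_im, Complex.add_re, Complex.conj_re, Complex.conj_im, Complex.ratCast_re,
    Complex.ratCast_im]
  ring

lemma pairZ_ne_zero_of_mem_UPlus (hc : c ≠ 0) (hce : dotZ c e = 0) (hx : x ∈ UPlus e) :
    pairZ c x ≠ 0 := by
  obtain ⟨α, β, ⟨-, -, -, hspan, -⟩, hM⟩ := hx
  obtain ⟨p, q, hpq⟩ := hspan (toQ c) (by rw [dotQ_toQ, hce, Int.cast_zero])
  intro hcx
  rw [pairZ_eq_of_toQ_eq hpq] at hcx
  have hp : (p : ℝ) * (pairQ α x * (starRingEnd ℂ) (pairQ β x)).im = 0 := by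
    simpa [hcx] using im_mul_conj_add_mul p q 0 1 (pairQ α x) (pairQ β x)
  have hq : (q : ℝ) * (pairQ α x * (starRingEnd ℂ) (pairQ β x)).im = 0 := by
    simpa [hcx] using im_mul_conj_add_mul 1 0 p q (pairQ α x) (pairQ β x)
  have hp0 : p = 0 := by exact_mod_cast (mul_eq_zero.mp hp).resolve_right hM.ne'
  have hq0 : q = 0 := by exact_mod_cast (mul_eq_zero.mp hq).resolve_right hM.ne'
  apply hc
  funext i
  simpa [toQ, hp0, hq0] using congrFun hpq i

lemma exists_im_div_eq_mul_det3Q (hx : x ∈ UPlus e) (hγx : pairZ γ x ≠ 0) (hce : dotZ c e = 0)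
    (hγe : dotZ γ e = 0) (hξ : 0 < dotZ ξ e) :
    ∃ K : ℝ, 0 < K ∧ (pairZ c x / pairZ γ x).im = K * det3Q (toQ c) (toQ γ) (toQ ξ) := by
  obtain ⟨α, β, ⟨-, -, -, hspan, horient⟩, hM⟩ := hx
  obtain ⟨p, q, hpq⟩ := hspan (toQ c) (by rw [dotQ_toQ, hce, Int.cast_zero])
  obtain ⟨r, t, hrt⟩ := hspan (toQ γ) (by rw [dotQ_toQ, hγe, Int.cast_zero])
  have hD : (0 : ℝ) < det3Q α β (toQ ξ) := by
    exact_mod_cast horient _ (by rw [dotQ_toQ]; exact_mod_cast hξ)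
  set M := (pairQ α x * (starRingEnd ℂ) (pairQ β x)).im
  have hnum : (pairZ c x * (starRingEnd ℂ) (pairZ γ x)).im = (p * t - q * r) * M := by
    rw [pairZ_eq_of_toQ_eq hpq, pairZ_eq_of_toQ_eq hrt, im_mul_conj_add_mul]
  refine ⟨M / (det3Q α β (toQ ξ) * Complex.normSq (pairZ γ x)),
    div_pos hM (mul_pos hD (Complex.normSq_pos.mpr hγx)), ?_⟩
  rw [div_eq_mul_inv, Complex.inv_def, ← mul_assoc, mul_comm, Complex.im_ofReal_mul, hnum, hpq,
    hrt, det3Q_smul_add_smul]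
  push_cast
  field_simp

end Pairings

namespace IsDirVec

variable {a b c γ : V} {x : Fin 3 → ℂ}

lemma pairZ_ne_zero (h : IsDirVec a b γ) (hx : x ∈ UPlus a) : pairZ γ x ≠ 0 :=
  pairZ_ne_zero_of_mem_UPlus h.1.1 h.dotZ_left_eq_zero hx

lemma im_div_neg (h : IsDirVec a b γ) (hx : x ∈ UPlus b) (hcb : dotZ c b = 0)
    (hca : 0 < dotZ c a) : (pairZ c x / pairZ γ x).im < 0 := by
  have hbb := dotZ_self_pos h.right_ne_zero
  obtain ⟨K, hK, hIm⟩ := exists_im_div_eq_mul_det3Q (ξ := b) hx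
    (pairZ_ne_zero_of_mem_UPlus h.1.1 h.dotZ_right_eq_zero hx) hcb h.dotZ_right_eq_zero hbb
  obtain ⟨-, s, hs, hcross⟩ := h
  have hdet : (s : ℚ) * det3Q (toQ c) (toQ γ) (toQ b) = -(dotZ c a * dotZ b b) := by
    rw [← det3Q_smul_middle, ← toQ_smul, ← hcross, det3Q_toQ_cross, hcb]
    ring
  have hneg : det3Q (toQ c) (toQ γ) (toQ b) < 0 := by
    have : (0 : ℚ) < dotZ c a * dotZ b b := by exact_mod_cast mul_pos hca hbb
    nlinarith [(by exact_mod_cast hs : (1 : ℚ) ≤ s)]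
  rw [hIm]
  exact mul_neg_of_pos_of_neg hK (by exact_mod_cast hneg)

lemma im_div_pos (h : IsDirVec a b γ) (hx : x ∈ UPlus a) (hca : dotZ c a = 0)
    (hcb : 0 < dotZ c b) : 0 < (pairZ c x / pairZ γ x).im := by
  have := h.swap.im_div_neg hx hca hcb
  rwa [pairZ_neg, div_neg, Complex.neg_im, neg_lt_zero] at this

/-- `Im (δ(x)/γ(x))` vanishes on `ℤγ = {δ : δ·a = δ·b = 0}`. -/
lemma exists_im_div_eq (h : IsDirVec a b γ) (hx : x ∈ UPlus a ∩ UPlus b) :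
    ∃ c₁ c₂ : ℝ, c₁ < 0 ∧ 0 < c₂ ∧
      ∀ δ : V, (pairZ δ x / pairZ γ x).im = c₁ * dotZ δ a + c₂ * dotZ δ b := by
  set Δ := dotZ a a * dotZ b b - dotZ a b ^ 2
  have hΔ : (0 : ℝ) < Δ := by exact_mod_cast h.gram_pos
  set U : V := dotZ b b • a - dotZ a b • b
  set W : V := dotZ a a • b - dotZ a b • a
  have hU : dotZ U a = Δ ∧ dotZ U b = 0 := by
    simp only [U, Δ, dotZ, Pi.sub_apply, Pi.smul_apply, smul_eq_mul]; constructor <;> ring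
  have hW : dotZ W a = 0 ∧ dotZ W b = Δ := by
    simp only [W, Δ, dotZ, Pi.sub_apply, Pi.smul_apply, smul_eq_mul]; constructor <;> ring
  have hγx := h.pairZ_ne_zero hx.1
  refine ⟨(pairZ U x / pairZ γ x).im / Δ, (pairZ W x / pairZ γ x).im / Δ,
    div_neg_of_neg_of_pos (h.im_div_neg hx.2 hU.2 (hU.1 ▸ h.gram_pos)) hΔ,
    div_pos (h.im_div_pos hx.1 hW.1 (hW.2 ▸ h.gram_pos)) hΔ, fun δ => ?_⟩
  obtain ⟨k, hk⟩ : Δ • δ - dotZ δ a • U - dotZ δ b • W ∈ AddSubgroup.zmultiples γ := by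
    apply h.mem_zmultiples <;>
      simp only [U, W, Δ, dotZ, Pi.sub_apply, Pi.smul_apply, smul_eq_mul] <;> ring
  have hkx := congrArg (fun v => pairZ v x / pairZ γ x) hk
  simp only [pairZ_sub, pairZ_smul, sub_div, mul_div_assoc, div_self hγx] at hkx
  have hIm := congrArg Complex.im hkx
  simp only [Complex.sub_im, Complex.mul_im, Complex.intCast_re, Complex.intCast_im,
    zero_mul, add_zero, mul_one] at hIm
  field_simp
  linarith

lemma exists_im_div_le (h : IsDirVec a b γ) (hx : x ∈ UPlus a ∩ UPlus b) :
    ∃ ε : ℝ, 0 < ε ∧ ∀ δ ∈ Cpm a b,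
      (pairZ δ x / pairZ γ x).im ≤ -ε * ((dotZ δ a).toNat + (-dotZ δ b).toNat : ℕ) := by
  obtain ⟨c₁, c₂, hc₁, hc₂, hIm⟩ := h.exists_im_div_eq hx
  refine ⟨min (-c₁) c₂, lt_min (neg_pos.mpr hc₁) hc₂, fun δ ⟨hδa, hδb⟩ => ?_⟩
  have ha : (((dotZ δ a).toNat : ℕ) : ℝ) = dotZ δ a := by exact_mod_cast Int.toNat_of_nonneg hδa.le
  have hb : (((-dotZ δ b).toNat : ℕ) : ℝ) = -dotZ δ b := by
    exact_mod_cast Int.toNat_of_nonneg (neg_nonneg.mpr hδb)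
  have hδa' : (0 : ℝ) ≤ dotZ δ a := by exact_mod_cast hδa.le
  have hδb' : (dotZ δ b : ℝ) ≤ 0 := by exact_mod_cast hδb
  rw [hIm, Nat.cast_add, ha, hb]
  nlinarith [min_le_left (-c₁) c₂, min_le_right (-c₁) c₂]

end IsDirVec

section Products

open Complex Real

variable {γ : V} {x : Fin 3 → ℂ} {w : ℂ}

lemma norm_cexp_neg_two_pi_I_mul_div (z u : ℂ) :
    ‖cexp (-(2 * π * I) * z / u)‖ = Real.exp (2 * π * (z / u).im) := by
  rw [norm_exp, mul_div_assoc]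
  simp

lemma gammaFacP_ne_zero (hγx : pairZ γ x ≠ 0) (hw : ∀ δ : V, w ≠ pairZ δ x) (δ : V) :
    gammaFacP γ x w δ ≠ 0 := by
  intro h
  obtain ⟨n, hn⟩ := exp_eq_one_iff.mp (sub_eq_zero.mp h).symm
  have hπ : 2 * (π : ℂ) * I ≠ 0 := by simp [Real.pi_ne_zero, I_ne_zero]
  rw [div_eq_iff hγx] at hn
  apply hw (δ + n • γ)
  rw [pairZ_add, pairZ_smul]
  apply mul_left_cancel₀ hπ
  linear_combination hn

lemma summable_of_le_geometric {ι : Type*} {f : ι → ℝ} (g : ι → ℕ × ℕ)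
    (hg : Function.Injective g) {C r : ℝ} (hr₀ : 0 ≤ r) (hr₁ : r < 1)
    (hf : ∀ i, ‖f i‖ ≤ C * r ^ ((g i).1 + (g i).2)) : Summable f := by
  have hgeom := summable_geometric_of_lt_one hr₀ hr₁
  have : Summable fun p : ℕ × ℕ => C * r ^ (p.1 + p.2) := by
    simp_rw [pow_add]
    exact (hgeom.mul_of_nonneg hgeom (pow_nonneg hr₀) (pow_nonneg hr₀)).mul_left C
  exact (this.comp_injective hg).of_norm_bounded hf

/-- On the classes of `C₊₋(a,b)` the terms `e^{-2πi(δ(x)-w)/γ(x)}` decay geometrically in `δ·a`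
and `-δ·b`, so the product converges absolutely. -/
lemma IsDirVec.tprod_gammaFacP_ne_zero {a b : V} (h : IsDirVec a b γ)
    (hx : x ∈ UPlus a ∩ UPlus b) (hw : ∀ δ : V, w ≠ pairZ δ x) :
    ∏' q : (QuotientAddGroup.mk '' Cpm a b : Set (V ⧸ AddSubgroup.zmultiples γ)),
      gammaFacP γ x w (Quotient.out (q : V ⧸ AddSubgroup.zmultiples γ)) ≠ 0 := by
  have hγx := h.pairZ_ne_zero hx.1
  obtain ⟨ε, hε, hle⟩ := h.exists_im_div_le hx
  simp_rw [gammaFacP, sub_eq_add_neg]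
  refine tprod_one_add_ne_zero_of_summable (fun q => ?_) ?_
  · simpa only [gammaFacP, sub_eq_add_neg] using gammaFacP_ne_zero hγx hw _
  let g (q : (QuotientAddGroup.mk '' Cpm a b : Set (V ⧸ AddSubgroup.zmultiples γ))) : ℕ × ℕ :=
    ((dotZ (Quotient.out q.1) a).toNat, (-dotZ (Quotient.out q.1) b).toNat)
  have hg : Function.Injective g := by
    rintro ⟨q, hq⟩ ⟨q', hq'⟩ hqq'
    obtain ⟨ha, hb⟩ := h.out_mem_Cpm hq
    obtain ⟨ha', hb'⟩ := h.out_mem_Cpm hq'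
    simp only [g, Prod.mk.injEq] at hqq'
    rw [Subtype.mk.injEq, ← QuotientAddGroup.out_eq' q, ← QuotientAddGroup.out_eq' q',
      h.mk_eq_mk_iff]
    omega
  have hr : Real.exp (-(2 * π * ε)) < 1 := Real.exp_lt_one_iff.mpr (by simp [hε, Real.pi_pos])
  refine summable_of_le_geometric g hg (C := Real.exp (-(2 * π * (w / pairZ γ x).im)))
    (Real.exp_pos _).le hr fun q => ?_
  rw [norm_norm, norm_neg, norm_cexp_neg_two_pi_I_mul_div, ← Real.exp_nat_mul, ← Real.exp_add,
    add_div, Complex.add_im, neg_div, Complex.neg_im]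
  gcongr
  have := hle _ (h.out_mem_Cpm q.2)
  nlinarith [Real.pi_pos]

lemma gammaFacP_neg (γ : V) (x : Fin 3 → ℂ) (w : ℂ) : gammaFacP (-γ) x w = gammaFacM γ x w := by
  funext δ; rw [gammaFacP, gammaFacM, pairZ_neg, neg_mul, neg_div_neg_eq]

lemma gammaFacM_neg (γ : V) (x : Fin 3 → ℂ) (w : ℂ) : gammaFacM (-γ) x w = gammaFacP γ x w := by
  funext δ; rw [gammaFacP, gammaFacM, pairZ_neg, div_neg, neg_mul, neg_div]

end Products

lemma Cpm_swap (a b : V) : Cpm b a = Cmp a b := Set.ext fun _ => and_comm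

lemma Cmp_swap (a b : V) : Cmp b a = Cpm a b := Set.ext fun _ => and_comm

theorem statement5_general (a b γab γba : V)
    (hγab : IsDirVec a b γab) (hγba : IsDirVec b a γba)
    (x : Fin 3 → ℂ) (hx : x ∈ UPlus a ∩ UPlus b)
    (w : ℂ) (hw : ∀ δ : V, w ≠ pairZ δ x) :
    GammaWedge a b γab w x * GammaWedge b a γba w x = 1 := by
  obtain rfl : γba = -γab := hγba.unique hγab.swap
  have hnum := hγab.tprod_gammaFacP_ne_zero hx hw
  have hden := hγba.tprod_gammaFacP_ne_zero ⟨hx.2, hx.1⟩ hw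
  rw [AddSubgroup.zmultiples_neg, Cpm_swap a b, gammaFacP_neg] at hden
  rw [GammaWedge, GammaWedge, if_neg hγab.ne, if_neg hγba.ne, AddSubgroup.zmultiples_neg,
    Cpm_swap a b, Cmp_swap a b, gammaFacP_neg, gammaFacM_neg, div_mul_div_comm, mul_comm,
    div_self (mul_ne_zero hden hnum)]

/-- the inversion relation `Γ_{a,b}(w,x)·Γ_{b,a}(w,x) = 1`. -/
theorem statement5 (a b γab γba : V) (ha : Primitive a) (hb : Primitive b)
    (hab : LinearIndependent ℚ ![toQ a, toQ b])
    (hγab : IsDirVec a b γab) (hγba : IsDirVec b a γba)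
    (x : Fin 3 → ℂ) (hx : x ∈ UPlus a ∩ UPlus b)
    (w : ℂ) (hw : ∀ δ : V, w ≠ pairZ δ x) :
    GammaWedge a b γab w x * GammaWedge b a γba w x = 1 :=
  statement5_general a b γab γba hγab hγba x hx w hw

end EGG
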